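/- Pointwise form of Lemma B.6 for binary downstream tasks: For every logits function g : X → ℝ^K, Σ_{1≤i<j≤K} (p_i p_j / S)·L_pair(i,j,g) ≤ (u/l)²·L_pre(g). That is, the average of the binary task losses of g over pairs of classes, weighted proportionally to p_i p_j, is at most (u/l)² times the K-class cross-entropy pretraining loss of g. -/

import Mathlib

open scoped BigOperators

/-- `K`-class cross-entropy pretraining loss of logits `g`. -/
noncomputable def Lpre {X : Type*} [Fintype X] {K : ℕ}
    (p : Fin K → ℝ) (D : Fin K → X → ℝ) (g : X → Fin K → ℝ) : ℝ :=
  ∑ i, p i * ∑ x, D i x *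
    Real.log ((∑ k, Real.exp (g x k)) / Real.exp (g x i))

/-- Binary task loss of logits `g` on the pair of classes `i, j`. -/
noncomputable def Lpair {X : Type*} [Fintype X] {K : ℕ}
    (D : Fin K → X → ℝ) (i j : Fin K) (g : X → Fin K → ℝ) : ℝ :=
  (1 / 2) * ∑ x, D i x *
      Real.log ((Real.exp (g x i) + Real.exp (g x j)) / Real.exp (g x i)) +
    (1 / 2) * ∑ x, D j x *
      Real.log ((Real.exp (g x i) + Real.exp (g x j)) / Real.exp (g x j))

/-!
Write `A i` for the cross-entropy of class `i`, so that `L_pre = ∑ p_i A_i ≥ l ∑ A_i`.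
Since `exp g_i + exp g_j ≤ ∑_k exp g_k`, each binary loss satisfies
`L_pair(i, j) ≤ (A_i + A_j) / 2`; with `p_i p_j ≤ u²` the weighted sum over pairs is at most
`u² (K - 1) / 2 · ∑ A_i`. Because `∑ p_i = 1`, the normaliser satisfies
`S ≥ ∑_{i<j} l (p_i + p_j) / 2 = l (K - 1) / 2`, and the two bounds combine to `(u / l)²`.
-/

open Finset Real

theorem sum_sum_ite_lt_add {ι R : Type*} [Fintype ι] [LinearOrder ι] [Ring R] (c : ι → R) :
    ∑ i, ∑ j, (if i < j then c i + c j else 0) = ((Fintype.card ι : R) - 1) * ∑ i, c i := by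
  have split (i j : ι) : (if i < j then c i + c j else 0) =
      (if i < j then c i else 0) + if i < j then c j else 0 := by
    split_ifs <;> simp
  have swap : ∑ i, ∑ j, (if i < j then c j else 0) = ∑ i, ∑ j, (if j < i then c i else 0) :=
    sum_comm
  have off_diagonal (i : ι) :
      ∑ j, ((if i < j then c i else 0) + if j < i then c i else 0) =
        ((Fintype.card ι : R) - 1) * c i := by
    have h (j : ι) : ((if i < j then c i else 0) + if j < i then c i else 0) =
        c i - if i = j then c i else 0 := by
      rcases lt_trichotomy i j with hij | rfl | hij
      · simp [hij, hij.ne, hij.not_gt]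
      · simp
      · simp [hij, hij.ne', hij.not_gt]
    simp only [h, sum_sub_distrib, sum_ite_eq, sum_const, mem_univ, if_true, card_univ,
      nsmul_eq_mul, sub_mul, one_mul]
  simp only [split, sum_add_distrib, swap, ← off_diagonal, mul_sum]

theorem half_mul_sum_le_sum_sum_ite_lt_mul {ι : Type*} [Fintype ι] [LinearOrder ι]
    {p : ι → ℝ} {l : ℝ} (hl : 0 ≤ l) (hpl : ∀ i, l ≤ p i) :
    l / 2 * (((Fintype.card ι : ℝ) - 1) * ∑ i, p i) ≤
      ∑ i, ∑ j, if i < j then p i * p j else 0 := by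
  rw [← sum_sum_ite_lt_add, mul_sum]
  refine sum_le_sum fun i _ => ?_
  rw [mul_sum]
  refine sum_le_sum fun j _ => ?_
  split_ifs
  · nlinarith [hpl i, hpl j]
  · simp

theorem exp_add_exp_le_sum_exp {ι : Type*} [Fintype ι] (v : ι → ℝ) {i j : ι} (hij : i ≠ j) :
    exp (v i) + exp (v j) ≤ ∑ k, exp (v k) :=
  add_le_sum (fun k _ => (exp_pos (v k)).le) (mem_univ i) (mem_univ j) hij

section Losses

variable {X : Type*} [Fintype X] {K : ℕ}

noncomputable def classCrossEntropy (D : Fin K → X → ℝ) (g : X → Fin K → ℝ) (i : Fin K) : ℝ :=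
  ∑ x, D i x * log ((∑ k, exp (g x k)) / exp (g x i))

theorem Lpre_eq_sum_mul_classCrossEntropy (p : Fin K → ℝ) (D : Fin K → X → ℝ)
    (g : X → Fin K → ℝ) : Lpre p D g = ∑ i, p i * classCrossEntropy D g i :=
  rfl

variable {D : Fin K → X → ℝ} (g : X → Fin K → ℝ)

theorem classCrossEntropy_nonneg {i : Fin K} (hD : ∀ x, 0 ≤ D i x) :
    0 ≤ classCrossEntropy D g i := by
  refine sum_nonneg fun x _ => mul_nonneg (hD x) (log_nonneg ?_)
  rw [le_div_iff₀ (exp_pos _), one_mul]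
  exact single_le_sum (fun k _ => (exp_pos (g x k)).le) (mem_univ i)

theorem sum_mul_log_pair_le_classCrossEntropy {i j m : Fin K} (hij : i ≠ j)
    (hD : ∀ x, 0 ≤ D m x) :
    ∑ x, D m x * log ((exp (g x i) + exp (g x j)) / exp (g x m)) ≤
      classCrossEntropy D g m := by
  refine sum_le_sum fun x _ => mul_le_mul_of_nonneg_left ?_ (hD x)
  gcongr
  exact exp_add_exp_le_sum_exp (g x) hij

theorem Lpair_le_classCrossEntropy_add (hD : ∀ i x, 0 ≤ D i x) {i j : Fin K} (hij : i ≠ j) :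
    Lpair D i j g ≤ (classCrossEntropy D g i + classCrossEntropy D g j) / 2 := by
  have hi := sum_mul_log_pair_le_classCrossEntropy g hij (hD i)
  have hj := sum_mul_log_pair_le_classCrossEntropy g hij (hD j)
  unfold Lpair
  linarith

theorem mul_sum_classCrossEntropy_le_Lpre (hD : ∀ i x, 0 ≤ D i x) {p : Fin K → ℝ} {l : ℝ}
    (hpl : ∀ i, l ≤ p i) : l * ∑ i, classCrossEntropy D g i ≤ Lpre p D g := by
  rw [Lpre_eq_sum_mul_classCrossEntropy, mul_sum]
  exact sum_le_sum fun i _ =>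
    mul_le_mul_of_nonneg_right (hpl i) (classCrossEntropy_nonneg g (hD i))

theorem sum_sum_ite_lt_mul_Lpair_le (hD : ∀ i x, 0 ≤ D i x) {p : Fin K → ℝ} {u : ℝ}
    (hp : ∀ i, 0 ≤ p i) (hpu : ∀ i, p i ≤ u) :
    (∑ i, ∑ j, if i < j then p i * p j * Lpair D i j g else 0) ≤
      u ^ 2 / 2 * (((K : ℝ) - 1) * ∑ i, classCrossEntropy D g i) := by
  set A := classCrossEntropy D g
  calc (∑ i, ∑ j, if i < j then p i * p j * Lpair D i j g else 0)
      ≤ ∑ i, ∑ j, if i < j then u ^ 2 / 2 * (A i + A j) else 0 := by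
        refine sum_le_sum fun i _ => sum_le_sum fun j _ => ?_
        split_ifs with hij
        · have hA := add_nonneg (classCrossEntropy_nonneg g (hD i))
            (classCrossEntropy_nonneg g (hD j))
          have hpp : p i * p j ≤ u ^ 2 := by nlinarith [hp i, hp j, hpu i, hpu j]
          calc p i * p j * Lpair D i j g
              ≤ p i * p j * ((A i + A j) / 2) :=
                mul_le_mul_of_nonneg_left (Lpair_le_classCrossEntropy_add g hD hij.ne)
                  (mul_nonneg (hp i) (hp j))
            _ ≤ u ^ 2 * ((A i + A j) / 2) := by gcongr
            _ = u ^ 2 / 2 * (A i + A j) := by ring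
        · rfl
    _ = u ^ 2 / 2 * (((K : ℝ) - 1) * ∑ i, A i) := by
        simp only [← mul_ite_zero, ← mul_sum, sum_sum_ite_lt_add, Fintype.card_fin]

end Losses

theorem pairwise_loss_le_pretraining_loss_general
    {X : Type*} [Fintype X] {K : ℕ}
    (D : Fin K → X → ℝ) (hD0 : ∀ i x, 0 ≤ D i x)
    (p : Fin K → ℝ) (hp1 : ∑ i, p i = 1)
    (l u : ℝ) (hl : 0 < l) (hpl : ∀ i, l ≤ p i) (hpu : ∀ i, p i ≤ u)
    (g : X → Fin K → ℝ) :
    (∑ i, ∑ j, if i < j then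
        (p i * p j / (∑ a, ∑ b, if a < b then p a * p b else 0)) * Lpair D i j g
      else 0) ≤ (u / l) ^ 2 * Lpre p D g := by
  set S := ∑ a, ∑ b, if a < b then p a * p b else 0
  set A := ∑ i, classCrossEntropy D g i
  have hp (i : Fin K) : 0 ≤ p i := hl.le.trans (hpl i)
  have hS0 : 0 ≤ S := sum_nonneg fun i _ => sum_nonneg fun j _ => by
    split_ifs
    exacts [mul_nonneg (hp i) (hp j), le_rfl]
  have hS : l / 2 * ((K : ℝ) - 1) ≤ S := by
    simpa [hp1] using half_mul_sum_le_sum_sum_ite_lt_mul (ι := Fin K) hl.le hpl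
  have hA : 0 ≤ l * A := mul_nonneg hl.le (sum_nonneg fun i _ => classCrossEntropy_nonneg g (hD0 i))
  have hLpre : l * A ≤ Lpre p D g := mul_sum_classCrossEntropy_le_Lpre g hD0 hpl
  have factor_S : (∑ i, ∑ j, if i < j then p i * p j / S * Lpair D i j g else 0) =
      (∑ i, ∑ j, if i < j then p i * p j * Lpair D i j g else 0) / S := by
    simp only [sum_div, ite_div, zero_div, div_mul_eq_mul_div]
  rw [factor_S]
  -- `div_le_of_le_mul₀` also covers `S = 0` (that is, `K ≤ 1`), where `x / 0 = 0`.
  refine div_le_of_le_mul₀ hS0 (mul_nonneg (sq_nonneg _) (hA.trans hLpre)) ?_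
  calc (∑ i, ∑ j, if i < j then p i * p j * Lpair D i j g else 0)
      ≤ u ^ 2 / 2 * (((K : ℝ) - 1) * A) := sum_sum_ite_lt_mul_Lpair_le g hD0 hp hpu
    _ = (u / l) ^ 2 * (l / 2 * ((K : ℝ) - 1) * (l * A)) := by field_simp
    _ ≤ (u / l) ^ 2 * (S * Lpre p D g) := by gcongr
    _ = (u / l) ^ 2 * Lpre p D g * S := by ring

/-- Pointwise form of Lemma B.6 for binary downstream tasks: the `p_i p_j`-weighted
average of binary task losses of `g` over pairs of classes is at most `(u/l)²` times
the `K`-class cross-entropy pretraining loss of `g`. -/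
theorem pairwise_loss_le_pretraining_loss
    {X : Type*} [Fintype X] [Nonempty X] {K : ℕ} (hK : 2 ≤ K)
    (D : Fin K → X → ℝ) (hD0 : ∀ i x, 0 ≤ D i x) (hD1 : ∀ i, ∑ x, D i x = 1)
    (p : Fin K → ℝ) (hp1 : ∑ i, p i = 1)
    (l u : ℝ) (hl : 0 < l) (hpl : ∀ i, l ≤ p i) (hpu : ∀ i, p i ≤ u)
    (g : X → Fin K → ℝ) :
    (∑ i, ∑ j, if i < j then
        (p i * p j / (∑ a, ∑ b, if a < b then p a * p b else 0)) * Lpair D i j g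
      else 0) ≤ (u / l) ^ 2 * Lpre p D g :=
  pairwise_loss_le_pretraining_loss_general D hD0 p hp1 l u hl hpl hpu g
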